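/- For any graph A with a single binary edge relation, the structure G^{atom}A (the atom-guarded comonad applied to A) is triangle-free: its Gaifman graph contains no clique of size 3. -/

import Mathlib

/-- The last entry of a play (list of sets), `λ(p)`. -/
def Lam {A : Type*} (p : List (Set A)) : Set A := p.getLastD ∅

/-- A focussed play: a list of subsets together with a focus element. -/
structure FPlay (A : Type*) where
  play : List (Set A)
  focus : A

/-- A focussed play is valid if its play is nonempty and its focus belongs to
the last entry of the play. -/
def Valid {A : Type*} (x : FPlay A) : Prop :=
  x.play ≠ [] ∧ x.focus ∈ Lam x.play

/-- `r` is the greatest common prefix of `p` and `q`. -/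
def IsGCP {A : Type*} (r p q : List (Set A)) : Prop :=
  r <+: p ∧ r <+: q ∧ ∀ u : List (Set A), u <+: p → u <+: q → u <+: r

/-- The equivalence on focussed plays: equal foci, nonempty greatest common
prefix, and the focus belongs to the last entry of every play on the path
between the two plays through their greatest common prefix. -/
def FEquiv {A : Type*} (x y : FPlay A) : Prop :=
  x.focus = y.focus ∧ ∃ r : List (Set A), IsGCP r x.play y.play ∧ r ≠ [] ∧
    (∀ u : List (Set A), r <+: u → u <+: x.play → x.focus ∈ Lam u) ∧
    (∀ u : List (Set A), r <+: u → u <+: y.play → x.focus ∈ Lam u)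

/-- Atom-guarded sets for a graph with a single binary edge relation E:
subsets of supports of E-edges. -/
def EGuarded {A : Type*} (E : A → A → Prop) (X : Set A) : Prop :=
  ∃ a b : A, E a b ∧ X ⊆ ({a, b} : Set A)

/-- A valid focussed play all of whose entries are E-guarded sets: a
representative of an element of G^{atom}A. -/
def EValid {A : Type*} (E : A → A → Prop) (x : FPlay A) : Prop :=
  Valid x ∧ x.play.Forall (EGuarded E)

/-- Gaifman adjacency in G^{atom}A on representatives: the two classes have
representatives with a common guarded play whose foci form an E-edge. -/
def EAdj {A : Type*} (E : A → A → Prop) (x y : FPlay A) : Prop :=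
  ∃ (p : List (Set A)) (a b : A), p ≠ [] ∧ p.Forall (EGuarded E) ∧
    FEquiv x ⟨p, a⟩ ∧ FEquiv y ⟨p, b⟩ ∧ (E a b ∨ E b a)

section Aux

variable {A : Type*}

/-- Greatest common prefixes always exist. -/
lemma exists_gcp (p q : List (Set A)) : ∃ r, IsGCP r p q := by
  classical
  induction p generalizing q with
  | nil => exact ⟨[], List.nil_prefix, List.nil_prefix, fun u hu _ => hu⟩
  | cons a p ih =>
    cases q with
    | nil => exact ⟨[], List.nil_prefix, List.nil_prefix, fun u _ hu => hu⟩
    | cons b q =>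
      by_cases hab : a = b
      · obtain ⟨r, h1, h2, h3⟩ := ih q
        subst hab
        refine ⟨a :: r, List.cons_prefix_cons.mpr ⟨rfl, h1⟩,
          List.cons_prefix_cons.mpr ⟨rfl, h2⟩, ?_⟩
        intro u hu1 hu2
        cases u with
        | nil => exact List.nil_prefix
        | cons c u =>
          obtain ⟨hc, hu1'⟩ := List.cons_prefix_cons.mp hu1
          obtain ⟨_, hu2'⟩ := List.cons_prefix_cons.mp hu2
          exact List.cons_prefix_cons.mpr ⟨hc, h3 u hu1' hu2'⟩
      · refine ⟨[], List.nil_prefix, List.nil_prefix, ?_⟩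
        intro u hu1 hu2
        cases u with
        | nil => exact List.prefix_refl _
        | cons c u =>
          obtain ⟨hc, _⟩ := List.cons_prefix_cons.mp hu1
          obtain ⟨hc', _⟩ := List.cons_prefix_cons.mp hu2
          exact absurd (hc.symm.trans hc') hab

lemma fequiv_symm {x y : FPlay A} (h : FEquiv x y) : FEquiv y x := by
  obtain ⟨hf, r, ⟨hr1, hr2, hr3⟩, hne, hA, hB⟩ := h
  exact ⟨hf.symm, r, ⟨hr2, hr1, fun u h1 h2 => hr3 u h2 h1⟩, hne,
    fun u h1 h2 => hf ▸ hB u h1 h2, fun u h1 h2 => hf ▸ hA u h1 h2⟩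

lemma fequiv_of_common_aux {x y : FPlay A} {p r r' : List (Set A)} {f : A}
    (hfx : x.focus = f) (hfy : y.focus = f)
    (hr : IsGCP r x.play p) (hrne : r ≠ [])
    (hA : ∀ u, r <+: u → u <+: x.play → x.focus ∈ Lam u)
    (hB : ∀ u, r <+: u → u <+: p → x.focus ∈ Lam u)
    (hr' : IsGCP r' y.play p)
    (hA' : ∀ u, r' <+: u → u <+: y.play → y.focus ∈ Lam u)
    (hrr' : r <+: r') : FEquiv x y := by
  obtain ⟨t, ht1, ht2, ht3⟩ := exists_gcp x.play y.play
  have hrt : r <+: t := ht3 r hr.1 (hrr'.trans hr'.1)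
  have htne : t ≠ [] := fun h => hrne (List.eq_nil_of_prefix_nil (h ▸ hrt))
  refine ⟨hfx.trans hfy.symm, t, ⟨ht1, ht2, ht3⟩, htne, ?_, ?_⟩
  · intro u h1 h2
    exact hA u (hrt.trans h1) h2
  · intro u h1 h2
    rcases List.prefix_or_prefix_of_prefix h2 hr'.1 with hu | hu
    · exact hB u (hrt.trans h1) (hu.trans hr'.2.1)
    · have hy := hA' u hu h2
      rw [hfy, ← hfx] at hy
      exact hy

/-- Two focussed plays equivalent to the same focussed play are equivalent. -/
lemma fequiv_of_common {p : List (Set A)} {f : A} {x y : FPlay A}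
    (hx : FEquiv x ⟨p, f⟩) (hy : FEquiv y ⟨p, f⟩) : FEquiv x y := by
  obtain ⟨hfx, r, hr, hrne, hA, hB⟩ := hx
  obtain ⟨hfy, r', hr', hrne', hA', hB'⟩ := hy
  rcases List.prefix_or_prefix_of_prefix hr.2.1 hr'.2.1 with h | h
  · exact fequiv_of_common_aux hfx hfy hr hrne hA hB hr' hA' h
  · exact fequiv_symm (fequiv_of_common_aux hfy hfx hr' hrne' hA' hB' hr hA h)

lemma mem_lam_aux {w : FPlay A} {p s : List (Set A)} {f : A}
    (hp : FEquiv w ⟨p, f⟩) (hs : FEquiv w ⟨s, f⟩)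
    {m : List (Set A)} (hm : IsGCP m p s)
    {u : List (Set A)} (hmu : m <+: u) (hu : u <+: p) : w.focus ∈ Lam u := by
  obtain ⟨hf1, r1, hr1, hr1ne, hA1, hB1⟩ := hp
  obtain ⟨hf5, r5, hr5, hr5ne, hA5, hB5⟩ := hs
  rcases List.prefix_or_prefix_of_prefix hr1.2.1 hu with h | h
  · exact hB1 u h hu
  · rcases List.prefix_or_prefix_of_prefix hr1.1 hr5.1 with h15 | h51
    · exact hB1 u ((hm.2.2 r1 hr1.2.1 (h15.trans hr5.2.1)).trans hmu) hu
    · exact hA5 u ((hm.2.2 r5 (h51.trans hr1.2.1) hr5.2.1).trans hmu) (h.trans hr1.1)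

/-- Key lemma: a focus lies in `Lam u` for every node `u` on the path between
the two plays it is equivalent to. -/
lemma mem_lam_of_two {w : FPlay A} {p s : List (Set A)} {f : A}
    (hp : FEquiv w ⟨p, f⟩) (hs : FEquiv w ⟨s, f⟩)
    {m : List (Set A)} (hm : IsGCP m p s)
    {u : List (Set A)} (hmu : m <+: u) (hu : u <+: p ∨ u <+: s) :
    w.focus ∈ Lam u := by
  rcases hu with hu | hu
  · exact mem_lam_aux hp hs hm hmu hu
  · exact mem_lam_aux hs hp ⟨hm.2.1, hm.1, fun v h1 h2 => hm.2.2 v h2 h1⟩ hmu hu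

lemma gcp_ne_nil {w : FPlay A} {p s : List (Set A)} {f : A}
    (hp : FEquiv w ⟨p, f⟩) (hs : FEquiv w ⟨s, f⟩)
    {m : List (Set A)} (hm : IsGCP m p s) : m ≠ [] := by
  obtain ⟨_, r1, hr1, hr1ne, _, _⟩ := hp
  obtain ⟨_, r5, hr5, hr5ne, _, _⟩ := hs
  rcases List.prefix_or_prefix_of_prefix hr1.1 hr5.1 with h | h
  · exact fun hnil =>
      hr1ne (List.eq_nil_of_prefix_nil (hnil ▸ hm.2.2 r1 hr1.2.1 (h.trans hr5.2.1)))
  · exact fun hnil =>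
      hr5ne (List.eq_nil_of_prefix_nil (hnil ▸ hm.2.2 r5 (h.trans hr1.2.1) hr5.2.1))

/-- The median of three nodes in the prefix tree: it lies on all three
pairwise paths. -/
lemma median {p q s m1 m2 m3 : List (Set A)}
    (h1 : IsGCP m1 p q) (h2 : IsGCP m2 p s) (h3 : IsGCP m3 q s) :
    ∃ med : List (Set A),
      (m1 <+: med ∧ (med <+: p ∨ med <+: q)) ∧
      (m2 <+: med ∧ (med <+: p ∨ med <+: s)) ∧
      (m3 <+: med ∧ (med <+: q ∨ med <+: s)) := by
  rcases List.prefix_or_prefix_of_prefix h1.1 h2.1 with h12 | h21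
  · rcases List.prefix_or_prefix_of_prefix h2.2.1 h3.2.1 with h23 | h32
    · exact ⟨m3, ⟨h12.trans h23, Or.inr h3.1⟩, ⟨h23, Or.inr h3.2.1⟩,
        ⟨List.prefix_refl _, Or.inl h3.1⟩⟩
    · exact ⟨m2, ⟨h12, Or.inl h2.1⟩, ⟨List.prefix_refl _, Or.inl h2.1⟩,
        ⟨h32, Or.inr h2.2.1⟩⟩
  · rcases List.prefix_or_prefix_of_prefix h1.2.1 h3.1 with h13 | h31
    · exact ⟨m3, ⟨h13, Or.inr h3.1⟩, ⟨h21.trans h13, Or.inr h3.2.1⟩,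
        ⟨List.prefix_refl _, Or.inl h3.1⟩⟩
    · exact ⟨m1, ⟨List.prefix_refl _, Or.inl h1.1⟩, ⟨h21, Or.inl h1.1⟩,
        ⟨h31, Or.inl h1.2.1⟩⟩

lemma lam_guarded {E : A → A → Prop} {p u : List (Set A)}
    (hp : p.Forall (EGuarded E)) (hu : u <+: p) (hne : u ≠ []) :
    EGuarded E (Lam u) := by
  rcases List.eq_nil_or_concat u with rfl | ⟨u', a, rfl⟩
  · exact absurd rfl hne
  · simp only [List.concat_eq_append] at hu ⊢
    have : Lam (u' ++ [a]) = a := List.getLastD_concat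
    rw [this]
    exact (List.forall_iff_forall_mem.mp hp) a (hu.subset (by simp))

end Aux

/-- For any graph A with a single binary edge relation, G^{atom}A is
triangle-free: among any three pairwise Gaifman-adjacent elements, two must be
equal (as classes). -/
theorem guarded_comonad_triangle_free {A : Type*} (E : A → A → Prop)
    (x y z : FPlay A)
    (hx : EValid E x) (hy : EValid E y) (hz : EValid E z)
    (hxy : EAdj E x y) (hyz : EAdj E y z) (hxz : EAdj E x z) :
    FEquiv x y ∨ FEquiv y z ∨ FEquiv x z := by
  obtain ⟨p, a, b, hpne, hpg, hxp, hyp, -⟩ := hxy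
  obtain ⟨q, b', c', hqne, hqg, hyq, hzq, -⟩ := hyz
  obtain ⟨s, a'', c'', hsne, hsg, hxs, hzs, -⟩ := hxz
  have hxa : x.focus = a := hxp.1
  have hyb : y.focus = b := hyp.1
  have hyb' : y.focus = b' := hyq.1
  have hzc : z.focus = c' := hzq.1
  have hxa' : x.focus = a'' := hxs.1
  have hzc' : z.focus = c'' := hzs.1
  have hxp' : FEquiv x ⟨p, x.focus⟩ := by rw [hxa]; exact hxp
  have hyp' : FEquiv y ⟨p, y.focus⟩ := by rw [hyb]; exact hyp
  have hyq' : FEquiv y ⟨q, y.focus⟩ := by rw [hyb']; exact hyq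
  have hzq' : FEquiv z ⟨q, z.focus⟩ := by rw [hzc]; exact hzq
  have hxs' : FEquiv x ⟨s, x.focus⟩ := by rw [hxa']; exact hxs
  have hzs' : FEquiv z ⟨s, z.focus⟩ := by rw [hzc']; exact hzs
  obtain ⟨m1, hm1⟩ := exists_gcp p q
  obtain ⟨m2, hm2⟩ := exists_gcp p s
  obtain ⟨m3, hm3⟩ := exists_gcp q s
  obtain ⟨med, ⟨hA1, hA2⟩, ⟨hB1, hB2⟩, ⟨hC1, hC2⟩⟩ := median hm1 hm2 hm3
  have hxmed : x.focus ∈ Lam med := mem_lam_of_two hxp' hxs' hm2 hB1 hB2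
  have hymed : y.focus ∈ Lam med := mem_lam_of_two hyp' hyq' hm1 hA1 hA2
  have hzmed : z.focus ∈ Lam med := mem_lam_of_two hzq' hzs' hm3 hC1 hC2
  have hm2ne : m2 ≠ [] := gcp_ne_nil hxp' hxs' hm2
  have hmedne : med ≠ [] := fun h => hm2ne (List.eq_nil_of_prefix_nil (h ▸ hB1))
  have hg : EGuarded E (Lam med) := by
    rcases hA2 with h | h
    exacts [lam_guarded hpg h hmedne, lam_guarded hqg h hmedne]
  obtain ⟨c, d, -, hsub⟩ := hg
  have h1 : x.focus = c ∨ x.focus = d := by simpa using hsub hxmed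
  have h2 : y.focus = c ∨ y.focus = d := by simpa using hsub hymed
  have h3 : z.focus = c ∨ z.focus = d := by simpa using hsub hzmed
  have hcases : x.focus = y.focus ∨ y.focus = z.focus ∨ x.focus = z.focus := by
    rcases h1 with h1 | h1 <;> rcases h2 with h2 | h2 <;> rcases h3 with h3 | h3
    · exact Or.inl (h1.trans h2.symm)
    · exact Or.inl (h1.trans h2.symm)
    · exact Or.inr (Or.inr (h1.trans h3.symm))
    · exact Or.inr (Or.inl (h2.trans h3.symm))
    · exact Or.inr (Or.inl (h2.trans h3.symm))
    · exact Or.inr (Or.inr (h1.trans h3.symm))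
    · exact Or.inl (h1.trans h2.symm)
    · exact Or.inl (h1.trans h2.symm)
  rcases hcases with h | h | h
  · rw [← h] at hyp'
    exact Or.inl (fequiv_of_common hxp' hyp')
  · rw [← h] at hzq'
    exact Or.inr (Or.inl (fequiv_of_common hyq' hzq'))
  · rw [← h] at hzs'
    exact Or.inr (Or.inr (fequiv_of_common hxs' hzs'))
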